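/- Let I be a monomial ideal of Borel type in S = k[x_1,...,x_n] with irredundant irreducible decomposition I = ⋂_{b∈B} m^b, and let I = I_0 ⊆ I_1 ⊆ ... ⊆ I_r = S be its sequential chain with n_l = m(I_l). Then for each l = 1,...,r−1, I_l = ⋂ { m^b : b ∈ B, supp(b) ⊆ {1,...,n_l} }. -/

import Mathlib

open MvPolynomial DirectSum

noncomputable section




variable {k : Type} [Field k] {n : ℕ}

/-- The maximal graded ideal `(x_1, …, x_n)` of `k[x_1,…,x_n]`. -/
def maxIdeal (k : Type) [Field k] (n : ℕ) : Ideal (MvPolynomial (Fin n) k) :=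
  Ideal.span (Set.range X)

/-- The "infinite colon" `I : J^∞ = ⋃_t (I : J^t)`. -/
def infColon (I J : Ideal (MvPolynomial (Fin n) k)) : Ideal (MvPolynomial (Fin n) k) :=
  ⨆ t : ℕ, Submodule.colon I ((J ^ t : Ideal (MvPolynomial (Fin n) k)) : Set (MvPolynomial (Fin n) k))

/-- The saturation `I^{sat} = I : m^∞`. -/
def satur (I : Ideal (MvPolynomial (Fin n) k)) : Ideal (MvPolynomial (Fin n) k) :=
  infColon I (maxIdeal k n)

/-- A monomial ideal: an ideal generated by monomials. -/
def IsMonomialIdeal (I : Ideal (MvPolynomial (Fin n) k)) : Prop :=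
  ∃ A : Set (Fin n →₀ ℕ), I = Ideal.span ((fun u => monomial u (1 : k)) '' A)

/-- `I` is of Borel type: `I : (x_1,…,x_i)^∞ = I : x_i^∞` for all `i`. -/
def IsBorelType (I : Ideal (MvPolynomial (Fin n) k)) : Prop :=
  ∀ i : Fin n,
    infColon I (Ideal.span {f | ∃ j ≤ i, f = X j}) = infColon I (Ideal.span {X i})

/-- Total degree of an exponent vector. -/
def expDeg (u : Fin n →₀ ℕ) : ℕ := u.sum fun _ e => e

/-- The truncated ideal `I_{≥ e}`, generated by all monomials of degree `≥ e` lying in `I`. -/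
def truncGE (I : Ideal (MvPolynomial (Fin n) k)) (e : ℕ) : Ideal (MvPolynomial (Fin n) k) :=
  Ideal.span {f | ∃ u : Fin n →₀ ℕ, monomial u (1 : k) ∈ I ∧ e ≤ expDeg u ∧ f = monomial u (1 : k)}

/-- A stable monomial ideal: for every monomial `x^u ∈ I` with largest variable `x_j`
dividing it and every `i < j`, also `x_i x^u / x_j ∈ I`. -/
def IsStable (I : Ideal (MvPolynomial (Fin n) k)) : Prop :=
  ∀ u : Fin n →₀ ℕ, monomial u (1 : k) ∈ I →
    ∀ j : Fin n, j ∈ u.support → (∀ l ∈ u.support, l ≤ j) →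
      ∀ i : Fin n, i < j →
        monomial (u - Finsupp.single j 1 + Finsupp.single i 1) (1 : k) ∈ I

/-- The set of (exponent vectors of) minimal monomial generators of a monomial ideal. -/
def minGens (I : Ideal (MvPolynomial (Fin n) k)) : Set (Fin n →₀ ℕ) :=
  {u | monomial u (1 : k) ∈ I ∧ ∀ v : Fin n →₀ ℕ, monomial v (1 : k) ∈ I → v ≤ u → v = u}

/-- The irreducible monomial ideal `m^b = (x_i^{b_i} : b_i ≥ 1)`. -/
def irredPow (k : Type) [Field k] {n : ℕ} (b : Fin n →₀ ℕ) : Ideal (MvPolynomial (Fin n) k) :=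
  Ideal.span {f | ∃ i : Fin n, 1 ≤ b i ∧ f = (X i : MvPolynomial (Fin n) k) ^ b i}





/-- The product of the variables indexed by `F`. -/
def varProd (k : Type) [Field k] {n : ℕ} (F : Finset (Fin n)) : MvPolynomial (Fin n) k :=
  ∏ i ∈ F, X i

variable (M : Type) [AddCommGroup M] [Module (MvPolynomial (Fin n) k) M]

variable (k) in
/-- The localization of `M` at the product of the variables indexed by `F`. -/
abbrev locAt' (F : Finset (Fin n)) : Type :=
  LocalizedModule (Submonoid.powers (varProd k F)) M

variable (k n) in
/-- The `p`-th term of the Čech complex. -/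
abbrev cechC (p : ℕ) : Type :=
  DirectSum {F : Finset (Fin n) // F.card = p} (fun F => locAt' k M F.1)

lemma commute_aux {A : Type} [Ring A] {a b : A} (h : Commute a b) (hu : IsUnit (a * b)) :
    IsUnit a := by
  refine isUnit_iff_exists.mpr ⟨b * ↑hu.unit⁻¹, ?_, ?_⟩
  · rw [← mul_assoc]
    simpa using hu.unit.mul_inv
  · have hc : Commute a (↑hu.unit : A) := by
      have : (↑hu.unit : A) = a * b := hu.unit_spec
      rw [this]
      exact (Commute.refl a).mul_right h
    have hc' : Commute a (↑hu.unit⁻¹ : A) := hc.units_inv_right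
    calc b * ↑hu.unit⁻¹ * a = b * (a * ↑hu.unit⁻¹) := by rw [mul_assoc, hc'.eq]
    _ = (a * b) * ↑hu.unit⁻¹ := by rw [← mul_assoc]; exact congrArg (· * _) h.eq.symm
    _ = 1 := by simpa using hu.unit.mul_inv

lemma isUnit_algebraMap_end (u v w : MvPolynomial (Fin n) k) (hw : w = u * v)
    (s : Submonoid.powers u) :
    IsUnit ((algebraMap (MvPolynomial (Fin n) k)
      (Module.End (MvPolynomial (Fin n) k)
        (LocalizedModule (Submonoid.powers w) M))) s) := by
  subst hw
  obtain ⟨t, ht⟩ := s.2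
  have h1 : IsUnit ((algebraMap (MvPolynomial (Fin n) k)
      (Module.End (MvPolynomial (Fin n) k)
        (LocalizedModule (Submonoid.powers (u * v)) M))) ((u * v) ^ t)) :=
    IsLocalizedModule.map_units
      (LocalizedModule.mkLinearMap (Submonoid.powers (u * v)) M)
      (⟨(u * v) ^ t, ⟨t, rfl⟩⟩ : Submonoid.powers (u * v))
  have h2 : (u * v) ^ t = (s : MvPolynomial (Fin n) k) * v ^ t := by
    rw [mul_pow]; simp only [ht]
  rw [h2, map_mul] at h1
  exact commute_aux ((Commute.all _ _).map _) h1

/-- The canonical map between localizations of `M` for `F ⊆ G`. -/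
def locMap (F G : Finset (Fin n)) (h : F ⊆ G) :
    locAt' k M F →ₗ[MvPolynomial (Fin n) k] locAt' k M G := by
  refine LocalizedModule.lift _
    (LocalizedModule.mkLinearMap (Submonoid.powers (varProd k G)) M) ?_
  intro s
  have hFG : varProd k G = varProd k F * varProd k (G \ F) := by
    rw [varProd, varProd, varProd, ← Finset.prod_sdiff h, mul_comm]
  exact isUnit_algebraMap_end M _ _ _ hFG s

set_option maxHeartbeats 1000000 in
variable (k n) in
/-- The Čech differential. -/
def cechD (p : ℕ) : cechC k n M p →ₗ[MvPolynomial (Fin n) k] cechC k n M (p + 1) :=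
  DirectSum.toModule (MvPolynomial (Fin n) k) _ (cechC k n M (p + 1)) (fun F =>
    ∑ j : Fin n,
      if h : j ∈ F.1 then 0 else
        ((-1 : ℤ) ^ ((F.1.filter (· < j)).card)) •
          ((DirectSum.lof (MvPolynomial (Fin n) k) {G : Finset (Fin n) // G.card = p + 1}
              (fun G => locAt' k M G.1)
              ⟨insert j F.1, by rw [Finset.card_insert_of_notMem h, F.2]⟩).comp
            (locMap M F.1 (insert j F.1) (Finset.subset_insert _ _))))


variable (k n) in
/-- The cocycles at Čech degree `p`, as an additive subgroup. -/
def cechZ (p : ℕ) : AddSubgroup (cechC k n M p) :=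
  AddMonoidHom.ker (cechD k n M p).toAddMonoidHom

variable (k n) in
/-- The coboundaries at Čech degree `p`, as an additive subgroup. -/
def cechB (p : ℕ) : AddSubgroup (cechC k n M p) :=
  Nat.casesOn (motive := fun p => AddSubgroup (cechC k n M p)) p ⊥
    (fun q => AddMonoidHom.range (G := cechC k n M q) (N := cechC k n M (q + 1))
      ((cechD k n M q).toAddMonoidHom))

variable (k n) in
/-- The `p`-th (Čech) local cohomology of `M` with respect to the maximal graded
ideal: cocycles modulo coboundaries. -/
abbrev cechH (p : ℕ) : Type :=
  (cechZ k n M p) ⧸ ((cechB k n M p).addSubgroupOf (cechZ k n M p))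

variable (dg : ℤ → AddSubgroup M)

/-- The degree-`j` part of the localization of `M` at `x_F`, induced by a grading `dg`
of `M`: it is generated by the fractions `m / x_F^t` with `m` homogeneous of degree
`j + t·|F|`. -/
def locDeg (F : Finset (Fin n)) (j : ℤ) : AddSubgroup (locAt' k M F) :=
  AddSubgroup.closure
    {z | ∃ (t : ℕ) (m : M), m ∈ dg (j + t * F.card) ∧
      z = LocalizedModule.mk m (⟨varProd k F ^ t, ⟨t, rfl⟩⟩ : Submonoid.powers (varProd k F))}

variable (k n) in
/-- The degree-`j` part of the `p`-th Čech term. -/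
def cechDeg (p : ℕ) (j : ℤ) : AddSubgroup (cechC k n M p) where
  carrier := {x | ∀ F, x F ∈ locDeg M dg F.1 j}
  zero_mem' := by intro F; rw [DirectSum.zero_apply]; exact zero_mem _
  add_mem' := by intro a b ha hb F; rw [DirectSum.add_apply]; exact add_mem (ha F) (hb F)
  neg_mem' := by intro a ha F; rw [DFinsupp.neg_apply]; exact neg_mem (ha F)

variable (k n) in
/-- The degree-`j` part of the `p`-th local cohomology of `M`. -/
def cechHdeg (p : ℕ) (j : ℤ) : AddSubgroup (cechH k n M p) :=
  AddSubgroup.map (QuotientAddGroup.mk' ((cechB k n M p).addSubgroupOf (cechZ k n M p)))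
    ((cechDeg k n M dg p j).comap (cechZ k n M p).subtype)

variable (k n) in
/-- `a_i(M) = max{ j : H_m^i(M)_j ≠ 0 }`, as an extended real (`⊥ = -∞` if the
local cohomology vanishes). -/
def aInv (i : ℕ) : EReal :=
  sSup {x : EReal | ∃ j : ℤ, cechHdeg k n M dg i j ≠ ⊥ ∧ x = ((j : ℝ) : EReal)}

variable (k n) in
/-- The partial regularity `reg_t(M) = max{ a_i(M) + i : i ≤ t }`. -/
def regT (t : ℕ) : EReal :=
  sSup {x : EReal | ∃ i ≤ t, x = aInv k n M dg i + ((i : ℝ) : EReal)}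

variable (k n) in
/-- `a*_t(M) = max{ a_i(M) : i ≤ t }`. -/
def aStarT (t : ℕ) : EReal :=
  sSup {x : EReal | ∃ i ≤ t, x = aInv k n M dg i}

variable (k n) in
/-- The Castelnuovo–Mumford regularity `reg M = max_i { a_i(M) + i }`. -/
def cmReg : EReal :=
  sSup {x : EReal | ∃ i : ℕ, x = aInv k n M dg i + ((i : ℝ) : EReal)}

variable (k n) in
/-- The `a^*`-invariant `a^*(M) = max_i a_i(M)`. -/
def aStar : EReal :=
  sSup {x : EReal | ∃ i : ℕ, x = aInv k n M dg i}

/-- The canonical grading of a quotient `S/I` by a homogeneous ideal. -/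
def quotDeg (I : Ideal (MvPolynomial (Fin n) k)) (j : ℤ) :
    AddSubgroup ((MvPolynomial (Fin n) k) ⧸ I) :=
  if 0 ≤ j then
    AddSubgroup.map (Ideal.Quotient.mk I).toAddMonoidHom
      ((homogeneousSubmodule (Fin n) k j.toNat).toAddSubgroup)
  else ⊥

/-- The canonical grading of a homogeneous ideal `I ⊆ S`, viewed as an `S`-module. -/
def idealDeg (I : Ideal (MvPolynomial (Fin n) k)) (j : ℤ) : AddSubgroup I :=
  if 0 ≤ j then
    AddSubgroup.comap (Submodule.subtype I).toAddMonoidHom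
      ((homogeneousSubmodule (Fin n) k j.toNat).toAddSubgroup)
  else ⊥

variable (k n) in
/-- `a_i(S/I)` for a homogeneous ideal `I`. -/
def aQuot (I : Ideal (MvPolynomial (Fin n) k)) (i : ℕ) : EReal :=
  aInv k n ((MvPolynomial (Fin n) k) ⧸ I) (quotDeg I) i

variable (k n) in
/-- `a_i(I)` for a homogeneous ideal `I` viewed as a graded `S`-module. -/
def aIdealMod (I : Ideal (MvPolynomial (Fin n) k)) (i : ℕ) : EReal :=
  aInv k n I (idealDeg I) i


variable (k n) in
/-- `reg_t(S/I)` for a homogeneous ideal `I`. -/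
def regTQuot (I : Ideal (MvPolynomial (Fin n) k)) (t : ℕ) : EReal :=
  regT k n ((MvPolynomial (Fin n) k) ⧸ I) (quotDeg I) t

variable (k n) in
/-- `a*_t(S/I)` for a homogeneous ideal `I`. -/
def aStarTQuot (I : Ideal (MvPolynomial (Fin n) k)) (t : ℕ) : EReal :=
  aStarT k n ((MvPolynomial (Fin n) k) ⧸ I) (quotDeg I) t

variable (k n) in
/-- `reg(S/I)` for a homogeneous ideal `I`. -/
def cmRegQuot (I : Ideal (MvPolynomial (Fin n) k)) : EReal :=
  cmReg k n ((MvPolynomial (Fin n) k) ⧸ I) (quotDeg I)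

variable (k n) in
/-- `a^*(S/I)` for a homogeneous ideal `I`. -/
def aStarQuot (I : Ideal (MvPolynomial (Fin n) k)) : EReal :=
  aStar k n ((MvPolynomial (Fin n) k) ⧸ I) (quotDeg I)

variable (k n) in
/-- `reg_t(I)` for a homogeneous ideal `I` viewed as a graded module. -/
def regTIdeal (I : Ideal (MvPolynomial (Fin n) k)) (t : ℕ) : EReal :=
  regT k n I (idealDeg I) t

variable (k n) in
/-- `a*_t(I)` for a homogeneous ideal `I` viewed as a graded module. -/
def aStarTIdeal (I : Ideal (MvPolynomial (Fin n) k)) (t : ℕ) : EReal :=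
  aStarT k n I (idealDeg I) t

variable (k n) in
/-- `reg(I)`, the Castelnuovo–Mumford regularity of the ideal `I` as a graded module. -/
def cmRegIdeal (I : Ideal (MvPolynomial (Fin n) k)) : EReal :=
  cmReg k n I (idealDeg I)

variable (k n) in
/-- The depth of a module: the maximal length of a regular sequence contained in the
maximal graded ideal. -/
def moduleDepth (N : Type) [AddCommGroup N] [Module (MvPolynomial (Fin n) k) N] : ℕ :=
  sSup {d : ℕ | ∃ rs : List (MvPolynomial (Fin n) k), rs.length = d ∧
    (∀ r ∈ rs, r ∈ maxIdeal k n) ∧ RingTheory.Sequence.IsRegular N rs}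

variable (k n) in
/-- The (Krull) dimension of a module, i.e. of `S` modulo its annihilator. -/
def moduleDim (N : Type) [AddCommGroup N] [Module (MvPolynomial (Fin n) k) N] :
    WithBot ℕ∞ :=
  ringKrullDim ((MvPolynomial (Fin n) k) ⧸ Module.annihilator (MvPolynomial (Fin n) k) N)

variable (k n) in
/-- A Cohen–Macaulay module: zero, or of depth equal to its dimension. -/
def IsCMmod (N : Type) [AddCommGroup N] [Module (MvPolynomial (Fin n) k) N] : Prop :=
  Subsingleton N ∨ ((moduleDepth k n N : ℕ∞) : WithBot ℕ∞) = moduleDim k n N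

/-- The satiety `s(I^{sat}/I)`: the largest degree `j` with `(I^{sat}/I)_j ≠ 0`,
i.e. with `(I^{sat})_j ⊄ I_j`, as an extended real. -/
def satietyDeg {k : Type} [Field k] {n : ℕ} (I : Ideal (MvPolynomial (Fin n) k)) : EReal :=
  sSup {x : EReal | ∃ j : ℕ,
    (∃ f ∈ homogeneousSubmodule (Fin n) k j, f ∈ satur I ∧ f ∉ I) ∧ x = ((j : ℝ) : EReal)}

/-- Maximal degree of a minimal monomial generator. -/
def genDeg {k : Type} [Field k] {n : ℕ} (I : Ideal (MvPolynomial (Fin n) k)) : ℕ :=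
  sSup {d : ℕ | ∃ u ∈ minGens I, expDeg u = d}

/-- `m(u)`: the (1-based) largest index of a variable dividing the monomial `x^u`. -/
def mVal {n : ℕ} (u : Fin n →₀ ℕ) : ℕ :=
  u.support.sup (fun i => (i : ℕ) + 1)

variable (k n) in
/-- The degree-`t` part of a graded free module `⊕_j S(-d_j)`, realized as
`Fin r →₀ S`: the `j`-th coordinate must be homogeneous of degree `t - d j`. -/
def freeDeg (r : ℕ) (d : Fin r → ℤ) (t : ℤ) :
    AddSubgroup (Fin r →₀ MvPolynomial (Fin n) k) where
  carrier := {f | ∀ j : Fin r,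
    (0 ≤ t - d j → f j ∈ homogeneousSubmodule (Fin n) k (t - d j).toNat) ∧
    (t - d j < 0 → f j = 0)}
  zero_mem' := by
    intro j
    exact ⟨fun _ => by simp, fun _ => by simp⟩
  add_mem' := by
    intro a b ha hb j
    refine ⟨fun h => ?_, fun h => ?_⟩
    · simpa [Finsupp.add_apply] using add_mem ((ha j).1 h) ((hb j).1 h)
    · simp [Finsupp.add_apply, (ha j).2 h, (hb j).2 h]
  neg_mem' := by
    intro a ha j
    refine ⟨fun h => ?_, fun h => ?_⟩
    · simpa [Finsupp.neg_apply] using neg_mem ((ha j).1 h)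
    · simp [Finsupp.neg_apply, (ha j).2 h]

/-- A minimal graded free resolution
`0 → F_s → ⋯ → F_1 → F_0 → M → 0` of a graded module `M` (with grading `dg`),
where `F_i` is free with `rk i` generators of degrees `dgen i j`. -/
structure MinimalGradedFreeRes (dg : ℤ → AddSubgroup M) where
  /-- length of the resolution -/
  s : ℕ
  /-- ranks of the free modules -/
  rk : ℕ → ℕ
  /-- degrees of the generators -/
  dgen : (i : ℕ) → Fin (rk i) → ℤ
  /-- the differentials `F_{i+1} → F_i` -/
  φ : (i : ℕ) → (Fin (rk (i + 1)) →₀ MvPolynomial (Fin n) k) →ₗ[MvPolynomial (Fin n) k]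
      (Fin (rk i) →₀ MvPolynomial (Fin n) k)
  /-- the augmentation `F_0 → M` -/
  ε : (Fin (rk 0) →₀ MvPolynomial (Fin n) k) →ₗ[MvPolynomial (Fin n) k] M
  rk_eq_zero : ∀ i, s < i → rk i = 0
  ε_surj : Function.Surjective ε
  ε_graded : ∀ (t : ℤ) x, x ∈ freeDeg k n (rk 0) (dgen 0) t → ε x ∈ dg t
  φ_graded : ∀ (i : ℕ) (t : ℤ) x, x ∈ freeDeg k n (rk (i + 1)) (dgen (i + 1)) t →
    φ i x ∈ freeDeg k n (rk i) (dgen i) t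
  exact_aug : LinearMap.ker ε = LinearMap.range (φ 0)
  exact_mid : ∀ i : ℕ, LinearMap.ker (φ i) = LinearMap.range (φ (i + 1))
  minimal : ∀ (i : ℕ) x (j : Fin (rk i)), (φ i x) j ∈ maxIdeal k n

/-! If a component `m^b` of an irredundant intersection `J = ⋂_{b ∈ C} m^b` involved a
variable `x_j` beyond all variables of the minimal generators of `J`, take a monomial `x^u` lying
in the other components but not in `m^b`: then `x^u x_j^{b_j} ∈ J`, and a minimal generator
dividing it divides `x^u`, a contradiction. Conversely every variable of a minimal generator
occurs in some component, so `m(J)` is the largest index in the supports of the components.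
Saturating by `x_j` removes the components with `j ∈ supp b` and keeps the others. Hence along
the chain `I_{l+1}` is the intersection of the components supported in `{1, …, n_l - 1}`, again
irredundant, so `n_{l+1} < n_l` and these are exactly the components supported in
`{1, …, n_{l+1}}`. -/

def IsIrredundantInf {ι α : Type*} [DecidableEq ι] [CompleteLattice α] (f : ι → α)
    (C : Finset ι) : Prop :=
  ∀ b ∈ C, ¬ ⨅ b' ∈ C.erase b, f b' ≤ f b

section IrredundantInf

variable {ι α : Type*} [DecidableEq ι] [CompleteLattice α] {f : ι → α}

lemma IsIrredundantInf.mono {B C : Finset ι} (hB : IsIrredundantInf f B) (hCB : C ⊆ B) :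
    IsIrredundantInf f C := fun b hb h =>
  hB b (hCB hb) ((biInf_mono fun _ hb' => Finset.erase_subset_erase b hCB hb').trans h)

lemma isIrredundantInf_iff_ne {C : Finset ι} :
    IsIrredundantInf f C ↔ ∀ b ∈ C, ⨅ b' ∈ C.erase b, f b' ≠ ⨅ b' ∈ C, f b' := by
  refine forall₂_congr fun b hb => ?_
  rw [← Finset.insert_erase hb, Finset.iInf_insert, Finset.erase_insert (Finset.notMem_erase b C),
    Ne, eq_comm, inf_eq_right]

end IrredundantInf

lemma forall_mem_le_and_notMem_iff_forall_mem_lt {α : Type*} [LinearOrder α] {s : Finset α}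
    {m : α} : ((∀ i ∈ s, i ≤ m) ∧ m ∉ s) ↔ ∀ i ∈ s, i < m :=
  ⟨fun h i hi => lt_of_le_of_ne (h.1 i hi) (ne_of_mem_of_not_mem hi h.2),
    fun h => ⟨fun i hi => (h i hi).le, fun hm => lt_irrefl m (h m hm)⟩⟩

lemma mem_infColon_span_singleton {I : Ideal (MvPolynomial (Fin n) k)}
    {x f : MvPolynomial (Fin n) k} :
    f ∈ infColon I (Ideal.span {x}) ↔ ∃ t : ℕ, f * x ^ t ∈ I := by
  have hmono : Monotone fun t : ℕ =>
      Submodule.colon I ((Ideal.span {x} ^ t : Ideal (MvPolynomial (Fin n) k)) : Set _) :=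
    fun s t hst => Submodule.colon_mono le_rfl (Ideal.pow_le_pow_right hst)
  rw [infColon, Submodule.mem_iSup_of_directed _ hmono.directed_le]
  simp only [Ideal.span_singleton_pow, Ideal.mem_colon_span_singleton]

lemma mem_infColon_span_singleton_iff_eventually {I : Ideal (MvPolynomial (Fin n) k)}
    {x f : MvPolynomial (Fin n) k} :
    f ∈ infColon I (Ideal.span {x}) ↔ ∀ᶠ t in Filter.atTop, f * x ^ t ∈ I := by
  rw [mem_infColon_span_singleton, Filter.eventually_atTop]
  refine exists_congr fun t => ⟨fun h s hts => ?_, fun h => h t le_rfl⟩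
  obtain ⟨d, rfl⟩ := Nat.exists_eq_add_of_le hts
  rw [pow_add, ← mul_assoc]
  exact I.mul_mem_right _ h

lemma infColon_biInf_span_singleton {ι : Type*} (C : Finset ι)
    (J : ι → Ideal (MvPolynomial (Fin n) k)) (x : MvPolynomial (Fin n) k) :
    infColon (⨅ b ∈ C, J b) (Ideal.span {x}) = ⨅ b ∈ C, infColon (J b) (Ideal.span {x}) := by
  ext f
  simp only [Submodule.mem_iInf, mem_infColon_span_singleton_iff_eventually,
    Filter.eventually_all_finset]

lemma IsMonomialIdeal.mem_iff {J : Ideal (MvPolynomial (Fin n) k)} (hJ : IsMonomialIdeal J)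
    {f : MvPolynomial (Fin n) k} : f ∈ J ↔ ∀ u ∈ f.support, monomial u (1 : k) ∈ J := by
  classical
  obtain ⟨A, rfl⟩ := hJ
  simp [mem_ideal_span_monomial_image, support_monomial]

lemma monomial_mem_of_le (J : Ideal (MvPolynomial (Fin n) k)) {u v : Fin n →₀ ℕ} (huv : u ≤ v)
    (hu : monomial u (1 : k) ∈ J) : monomial v (1 : k) ∈ J :=
  J.mem_of_dvd (monomial_one_dvd_monomial_one.mpr huv) hu

lemma exists_mem_minGens_le {J : Ideal (MvPolynomial (Fin n) k)} {u : Fin n →₀ ℕ}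
    (hu : monomial u (1 : k) ∈ J) : ∃ v ∈ minGens J, v ≤ u := by
  obtain ⟨v, ⟨hvJ, hvu⟩, hmin⟩ :=
    wellFounded_lt.has_min {v | monomial v (1 : k) ∈ J ∧ v ≤ u} ⟨u, hu, le_rfl⟩
  refine ⟨v, ⟨hvJ, fun w hwJ hwv => ?_⟩, hvu⟩
  by_contra hne
  exact hmin w ⟨hwJ, hwv.trans hvu⟩ (lt_of_le_of_ne hwv hne)

lemma irredPow_eq_span_monomial (b : Fin n →₀ ℕ) :
    irredPow k b = Ideal.span ((fun u => monomial u (1 : k)) ''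
      ((fun i => Finsupp.single i (b i)) '' b.support)) := by
  rw [Set.image_image, irredPow]
  congr 1
  ext f
  simp [X_pow_eq_monomial, Nat.one_le_iff_ne_zero, eq_comm]

lemma isMonomialIdeal_irredPow (b : Fin n →₀ ℕ) : IsMonomialIdeal (irredPow k b) :=
  ⟨_, irredPow_eq_span_monomial b⟩

lemma monomial_mem_irredPow {b u : Fin n →₀ ℕ} :
    monomial u (1 : k) ∈ irredPow k b ↔ ∃ i ∈ b.support, b i ≤ u i := by
  rw [irredPow_eq_span_monomial, mem_ideal_span_monomial_image]
  simp [Finsupp.single_le_iff]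

lemma monomial_mem_irredPow_congr {b u v : Fin n →₀ ℕ} (h : ∀ i ∈ b.support, u i = v i) :
    monomial u (1 : k) ∈ irredPow k b ↔ monomial v (1 : k) ∈ irredPow k b := by
  simp only [monomial_mem_irredPow]
  exact exists_congr fun i => and_congr_right fun hi => by rw [h i hi]

lemma infColon_irredPow_X_of_mem_support {b : Fin n →₀ ℕ} {j : Fin n} (hj : j ∈ b.support) :
    infColon (irredPow k b) (Ideal.span {X j}) = ⊤ :=
  eq_top_iff.mpr fun f _ => mem_infColon_span_singleton.mpr
    ⟨b j, Ideal.mul_mem_left _ f (Ideal.subset_span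
      ⟨j, Nat.one_le_iff_ne_zero.mpr (Finsupp.mem_support_iff.mp hj), rfl⟩)⟩

lemma infColon_irredPow_X_of_notMem_support {b : Fin n →₀ ℕ} {j : Fin n} (hj : j ∉ b.support) :
    infColon (irredPow k b) (Ideal.span {X j}) = irredPow k b := by
  refine le_antisymm (fun f hf => ?_) fun f hf => mem_infColon_span_singleton.mpr ⟨0, by simpa⟩
  obtain ⟨t, ht⟩ := mem_infColon_span_singleton.mp hf
  rw [(isMonomialIdeal_irredPow b).mem_iff] at ht ⊢
  intro u hu
  have hut : u + Finsupp.single j t ∈ (f * X j ^ t).support := by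
    rwa [mem_support_iff, X_pow_eq_monomial, coeff_mul_monomial, mul_one, ← mem_support_iff]
  refine (monomial_mem_irredPow_congr fun i hi => ?_).mp (ht _ hut)
  simp [(ne_of_mem_of_not_mem hi hj).symm]

lemma infColon_biInf_irredPow_X (C : Finset (Fin n →₀ ℕ)) (j : Fin n) :
    infColon (⨅ b ∈ C, irredPow k b) (Ideal.span {X j}) =
      ⨅ b ∈ C.filter (j ∉ ·.support), irredPow k b := by
  rw [infColon_biInf_span_singleton]
  ext f
  simp only [Submodule.mem_iInf, Finset.mem_filter, and_imp]
  refine forall₂_congr fun b _ => ?_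
  by_cases hj : j ∈ b.support
  · simp [infColon_irredPow_X_of_mem_support hj, hj]
  · simp [infColon_irredPow_X_of_notMem_support hj, hj]

lemma exists_mem_support_of_mem_minGens {C : Finset (Fin n →₀ ℕ)} {u : Fin n →₀ ℕ}
    (hu : u ∈ minGens (⨅ b ∈ C, irredPow k b)) {j : Fin n} (hj : j ∈ u.support) :
    ∃ b ∈ C, j ∈ b.support := by
  by_contra! hC
  have hmem : monomial (u.erase j) (1 : k) ∈ ⨅ b ∈ C, irredPow k b := by
    have hu₁ := hu.1
    simp only [Submodule.mem_iInf] at hu₁ ⊢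
    exact fun b hb => (monomial_mem_irredPow_congr fun i hi =>
      Finsupp.erase_ne (ne_of_mem_of_not_mem hi (hC b hb))).mpr (hu₁ b hb)
  have hle : u.erase j ≤ u := Finsupp.le_def.mpr fun i => by
    rw [Finsupp.erase_apply]
    split_ifs <;> simp
  have huj := DFunLike.congr_fun (hu.2 _ hmem hle) j
  rw [Finsupp.erase_same] at huj
  exact Finsupp.mem_support_iff.mp hj huj.symm

lemma support_le_of_minGens_support_le {C : Finset (Fin n →₀ ℕ)}
    (hC : IsIrredundantInf (irredPow k) C) {m : Fin n}
    (hm : ∀ u ∈ minGens (⨅ b ∈ C, irredPow k b), ∀ i ∈ u.support, i ≤ m) :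
    ∀ b ∈ C, ∀ j ∈ b.support, j ≤ m := by
  intro b hb j hj
  by_contra! hmj
  obtain ⟨f, hf, hfb⟩ := SetLike.not_le_iff_exists.mp (hC b hb)
  obtain ⟨u, hu, hub⟩ : ∃ u ∈ f.support, monomial u (1 : k) ∉ irredPow k b := by
    simpa using (isMonomialIdeal_irredPow b).mem_iff.not.mp hfb
  have hw : monomial (u + Finsupp.single j (b j)) (1 : k) ∈ ⨅ b' ∈ C, irredPow k b' := by
    simp only [Submodule.mem_iInf] at hf ⊢
    intro b' hb'
    by_cases hbb : b' = b
    · subst hbb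
      exact monomial_mem_irredPow.mpr ⟨j, hj, by simp⟩
    · exact monomial_mem_of_le _ le_self_add ((isMonomialIdeal_irredPow b').mem_iff.mp
        (hf b' (Finset.mem_erase.mpr ⟨hbb, hb'⟩)) u hu)
  obtain ⟨v, hv, hvw⟩ := exists_mem_minGens_le hw
  have hvj : v j = 0 := Finsupp.notMem_support_iff.mp fun h => (hm v hv j h).not_gt hmj
  have hvu : v ≤ u := Finsupp.le_def.mpr fun i => by
    rcases eq_or_ne i j with rfl | hij
    · simp [hvj]
    · simpa [Finsupp.single_apply, hij.symm] using Finsupp.le_def.mp hvw i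
  have huC := monomial_mem_of_le _ hvu hv.1
  simp only [Submodule.mem_iInf] at huC
  exact hub (huC b hb)

theorem sequential_chain_eq_partial_intersection_general
    {k : Type} [Field k] {n : ℕ} (I : Ideal (MvPolynomial (Fin n) k))
    (B : Finset (Fin n →₀ ℕ))
    (hdec : I = ⨅ b ∈ B, irredPow k b)
    (hirr : ∀ b ∈ B, (⨅ b' ∈ B.erase b, irredPow k b') ≠ I)
    (r : ℕ) (c : ℕ → Ideal (MvPolynomial (Fin n) k)) (nl : ℕ → Fin n)
    (h0 : c 0 = I)
    (hnl : ∀ l, l < r →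
      (∀ u ∈ minGens (c l), ∀ i ∈ u.support, i ≤ nl l) ∧
      (∃ u ∈ minGens (c l), nl l ∈ u.support))
    (hstep : ∀ l, l < r → c (l + 1) = infColon (c l) (Ideal.span {(X (nl l) : MvPolynomial (Fin n) k)})) :
    ∀ l, 1 ≤ l → l < r →
      c l = ⨅ b ∈ B, ⨅ (_ : ∀ i ∈ b.support, i ≤ nl l), irredPow k b := by
  classical
  have hB : IsIrredundantInf (irredPow k) B := isIrredundantInf_iff_ne.mpr (hdec ▸ hirr)
  suffices H : ∀ l < r, c l = ⨅ b ∈ B.filter (fun b => ∀ i ∈ b.support, i ≤ nl l), irredPow k b by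
    intro l _ hl
    simp only [H l hl, Finset.mem_filter, iInf_and]
  intro l hl
  induction l with
  | zero =>
    have hgen := (hnl 0 hl).1
    rw [h0, hdec] at hgen ⊢
    rw [Finset.filter_true_of_mem (support_le_of_minGens_support_le hB hgen)]
  | succ l ih =>
    set C := B.filter fun b => ∀ i ∈ b.support, i < nl l
    have hC : c (l + 1) = ⨅ b ∈ C, irredPow k b := by
      rw [hstep l (by omega), ih (by omega), infColon_biInf_irredPow_X, Finset.filter_filter]
      simp only [forall_mem_le_and_notMem_iff_forall_mem_lt, C]
    obtain ⟨hgen, u, hu, hju⟩ := hnl (l + 1) hl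
    rw [hC] at hgen hu ⊢
    have hsupp := support_le_of_minGens_support_le (hB.mono (Finset.filter_subset _ _)) hgen
    obtain ⟨b₀, hb₀, hjb₀⟩ := exists_mem_support_of_mem_minGens hu hju
    have hlt : nl (l + 1) < nl l := (Finset.mem_filter.mp hb₀).2 _ hjb₀
    have hCeq : C = B.filter fun b => ∀ i ∈ b.support, i ≤ nl (l + 1) :=
      Finset.filter_congr fun b hb => ⟨fun h => hsupp b (Finset.mem_filter.mpr ⟨hb, h⟩),
        fun h i hi => (h i hi).trans_lt hlt⟩
    rw [hCeq]

/-- Each term of the sequential chain of a Borel type ideal is the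
intersection of those irreducible components supported in the first `n_l` variables. -/
theorem sequential_chain_eq_partial_intersection
    {k : Type} [Field k] {n : ℕ} (I : Ideal (MvPolynomial (Fin n) k))
    (hI : IsMonomialIdeal I) (hB : IsBorelType I)
    (B : Finset (Fin n →₀ ℕ))
    (hdec : I = ⨅ b ∈ B, irredPow k b)
    (hirr : ∀ b ∈ B, (⨅ b' ∈ B.erase b, irredPow k b') ≠ I)
    (r : ℕ) (c : ℕ → Ideal (MvPolynomial (Fin n) k)) (nl : ℕ → Fin n)
    (h0 : c 0 = I) (hr : c r = ⊤) (hproper : ∀ l, l < r → c l ≠ ⊤)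
    (hnl : ∀ l, l < r →
      (∀ u ∈ minGens (c l), ∀ i ∈ u.support, i ≤ nl l) ∧
      (∃ u ∈ minGens (c l), nl l ∈ u.support))
    (hstep : ∀ l, l < r → c (l + 1) = infColon (c l) (Ideal.span {(X (nl l) : MvPolynomial (Fin n) k)})) :
    ∀ l, 1 ≤ l → l < r →
      c l = ⨅ b ∈ B, ⨅ (_ : ∀ i ∈ b.support, i ≤ nl l), irredPow k b :=
  sequential_chain_eq_partial_intersection_general I B hdec hirr r c nl h0 hnl hstep

end
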